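/- Let C ⊆ ℝⁿ be closed and let I ⊆ {1,…,n} be nonempty with π(C) unbounded. Then a vector v ∈ ℝⁿ belongs to the interior of the Clarke tangent cone T_C(∞_I) if and only if there exist constants ε > 0, R > 0, and λ > 0 such that x + t v' ∈ C for all x ∈ C with ‖π(x)‖ > R, all t ∈ [0, λ], and all v' in the closed ball B_ε(v) of radius ε around v. -/

import Mathlib

open Filter Topology Metric Set Bornology
open scoped InnerProductSpace Pointwise

noncomputable section

/-- Euclidean `n`-space. -/
abbrev En (n : ℕ) : Type := EuclideanSpace ℝ (Fin n)

/-- The Clarke tangent cone at infinity of `C ⊆ E`, where "going to infinity" is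
measured by `‖p x‖ → ∞` for a projection map `p`:  `v` belongs to the cone iff for all
sequences `x k ∈ C` with `‖p (x k)‖ → ∞` and all positive sequences `t k → 0` there is a
sequence `w k → v` with `x k + t k • w k ∈ C` for all `k`. -/
def tangentConeAtInfty {E F : Type*} [NormedAddCommGroup E] [NormedSpace ℝ E] [Norm F]
    (p : E → F) (C : Set E) : Set E :=
  {v | ∀ (x : ℕ → E) (t : ℕ → ℝ), (∀ k, x k ∈ C) →
      Tendsto (fun k => ‖p (x k)‖) atTop atTop →
      (∀ k, 0 < t k) → Tendsto t atTop (𝓝 0) →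
      ∃ w : ℕ → E, Tendsto w atTop (𝓝 v) ∧ ∀ k, x k + t k • w k ∈ C}

/-- Projection of `ℝⁿ` onto the coordinates indexed by `I`. -/
def proj {n : ℕ} (I : Finset (Fin n)) (x : En n) : EuclideanSpace ℝ ↥I := WithLp.toLp 2 (fun i => x i)

/-!
If the uniform condition holds, the constant direction `v'` works for every `v'` near `v`
once `‖π x‖ > R` and `t < λ`. Conversely, if a closed ball of directions around `v` lies in the
cone, compactness of that ball makes the approximation uniform: `infDist (x + s • u) C ≤ δ s`
for all `u` in the ball, all small `s > 0` and all `x ∈ C` far out. To reach `x + t • v'`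
exactly, walk along the segment in steps of lengths `t/2, t/4, …`, each time projecting
back to `C` and correcting the direction by at most `2δ`; the projected points converge to
`x + t • v'`, which lies in `C` because `C` is closed.
-/

lemma proj_sub {n : ℕ} (I : Finset (Fin n)) (a b : En n) :
    proj I (a - b) = proj I a - proj I b := by
  ext i; simp [proj]

lemma norm_proj_le {n : ℕ} (I : Finset (Fin n)) (x : En n) : ‖proj I x‖ ≤ ‖x‖ := by
  rw [EuclideanSpace.norm_eq, EuclideanSpace.norm_eq]
  apply Real.sqrt_le_sqrt
  calc ∑ i : ↥I, ‖proj I x i‖ ^ 2 = ∑ i ∈ I, ‖x i‖ ^ 2 := by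
        rw [← Finset.sum_coe_sort I (fun i => ‖x i‖ ^ 2)]; rfl
    _ ≤ ∑ i : Fin n, ‖x i‖ ^ 2 :=
        Finset.sum_le_sum_of_subset_of_nonneg (Finset.subset_univ I)
          (fun i _ _ => by positivity)

lemma norm_proj_le_norm_proj_add_norm_sub {n : ℕ} (I : Finset (Fin n)) (a b : En n) :
    ‖proj I a‖ ≤ ‖proj I b‖ + ‖a - b‖ := by
  have h := norm_sub_norm_le (proj I a) (proj I b)
  rw [← proj_sub] at h
  linarith [norm_proj_le I (a - b)]

section TangentConeAtInfty

variable {E F : Type*} [NormedAddCommGroup E] [NormedSpace ℝ E] [Norm F] {p : E → F}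
  {C : Set E}

lemma mem_interior_tangentConeAtInfty_of_forall_add_smul_mem {v : E} {ε R lam : ℝ}
    (hε : 0 < ε) (hlam : 0 < lam)
    (hC : ∀ x ∈ C, R < ‖p x‖ → ∀ t ∈ Icc (0:ℝ) lam, ∀ v' ∈ closedBall v ε, x + t • v' ∈ C) :
    v ∈ interior (tangentConeAtInfty p C) := by
  refine mem_interior.mpr ⟨ball v ε, fun v' hv' x t hxC hx ht0 ht => ?_, isOpen_ball,
    mem_ball_self hε⟩
  refine ⟨fun k => if R < ‖p (x k)‖ ∧ t k < lam then v' else 0, ?_, fun k => ?_⟩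
  · refine tendsto_const_nhds.congr' ?_
    filter_upwards [hx.eventually_gt_atTop R, ht.eventually_lt_const hlam]
      with k hxk htk
    simp [hxk, htk]
  · dsimp only
    split_ifs with h
    · exact hC _ (hxC k) h.1 _ ⟨(ht0 k).le, h.2.le⟩ _ (ball_subset_closedBall hv')
    · simpa using hxC k

lemma eventually_infDist_add_smul_lt {u₀ : E} (hu₀ : u₀ ∈ tangentConeAtInfty p C)
    {x u : ℕ → E} {s : ℕ → ℝ} (hxC : ∀ k, x k ∈ C)
    (hx : Tendsto (fun k => ‖p (x k)‖) atTop atTop) (hs0 : ∀ k, 0 < s k)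
    (hs : Tendsto s atTop (𝓝 0)) (hu : Tendsto u atTop (𝓝 u₀)) {δ : ℝ} (hδ : 0 < δ) :
    ∀ᶠ k in atTop, infDist (x k + s k • u k) C < δ * s k := by
  obtain ⟨w, hw, hwC⟩ := hu₀ x s hxC hx hs0 hs
  have hclose : ∀ᶠ k in atTop, ‖u k - w k‖ < δ := by
    simpa using ((hu.sub hw).norm).eventually_lt_const (by simpa using hδ)
  filter_upwards [hclose] with k hk
  calc infDist (x k + s k • u k) C ≤ dist (x k + s k • u k) (x k + s k • w k) :=
        infDist_le_dist_of_mem (hwC k)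
    _ = s k * ‖u k - w k‖ := by
        rw [dist_add_left, dist_smul₀, Real.norm_of_nonneg (hs0 k).le, dist_eq_norm]
    _ < δ * s k := by rw [mul_comm]; exact mul_lt_mul_of_pos_right hk (hs0 k)

lemma infDist_add_smul_le_of_norm_sub_le {y ζ w : E} {Δ δ : ℝ} (hΔ : 0 < Δ)
    (hy : ‖ζ - y‖ ≤ 2 * δ * Δ)
    (H : ∀ u ∈ closedBall w (2 * δ), infDist (y + Δ • u) C ≤ δ * Δ) :
    infDist (ζ + Δ • w) C ≤ δ * Δ := by
  have hreach : y + Δ • (w + Δ⁻¹ • (ζ - y)) = ζ + Δ • w := by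
    rw [smul_add, smul_inv_smul₀ hΔ.ne']; abel
  rw [← hreach]
  refine H _ ?_
  rw [mem_closedBall_iff_norm, add_sub_cancel_left, norm_smul,
    Real.norm_of_nonneg (inv_nonneg.2 hΔ.le), inv_mul_le_iff₀ hΔ]
  linarith

variable [ProperSpace E]

lemma exists_forall_infDist_add_smul_le {v : E} {r δ : ℝ} (hδ : 0 < δ)
    (hsub : closedBall v r ⊆ tangentConeAtInfty p C) :
    ∃ R : ℝ, 0 < R ∧ ∃ lam : ℝ, 0 < lam ∧ ∀ x ∈ C, R < ‖p x‖ →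
      ∀ s : ℝ, 0 < s → s ≤ lam → ∀ u ∈ closedBall v r, infDist (x + s • u) C ≤ δ * s := by
  by_contra! h
  have hk (k : ℕ) := h (k + 1) (by positivity) (1 / (k + 1)) (by positivity)
  choose x hxC hx s hs0 hs u hu hfar using hk
  obtain ⟨u₀, hu₀, φ, hφ, hconv⟩ := (isCompact_closedBall v r).tendsto_subseq hu
  have hxφ : Tendsto (fun k => ‖p (x (φ k))‖) atTop atTop :=
    tendsto_atTop_mono (fun k => (le_add_of_nonneg_right zero_le_one).trans (hx (φ k)).le)
      (tendsto_natCast_atTop_atTop.comp hφ.tendsto_atTop)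
  have hsφ : Tendsto (fun k => s (φ k)) atTop (𝓝 0) :=
    squeeze_zero (fun k => (hs0 (φ k)).le) (fun k => hs (φ k))
      (tendsto_one_div_add_atTop_nhds_zero_nat.comp hφ.tendsto_atTop)
  obtain ⟨k, hk⟩ := (eventually_infDist_add_smul_lt (hsub hu₀) (fun k => hxC (φ k)) hxφ
    (fun k => hs0 (φ k)) hsφ hconv hδ).exists
  exact (hfar (φ k)).not_gt hk

lemma add_smul_mem_of_forall_infDist_add_smul_le (hC : IsClosed C) {x w : E}
    (hx : x ∈ C) {t δ : ℝ} (ht : 0 < t) (hδ : 0 ≤ δ)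
    (H : ∀ y ∈ C, ‖y - x‖ ≤ t * (‖w‖ + δ) → ∀ s, 0 < s → s ≤ t →
      ∀ u ∈ closedBall w (2 * δ), infDist (y + s • u) C ≤ δ * s) :
    x + t • w ∈ C := by
  set a : ℕ → ℝ := fun j => t * (1 / 2) ^ j with ha
  set ζ : ℕ → E := fun j => x + (t - a j) • w with hζ
  have ha_pos (j : ℕ) : 0 < a j := by positivity
  have ha_le (j : ℕ) : a j ≤ t :=
    mul_le_of_le_one_right ht.le (pow_le_one₀ (by norm_num) (by norm_num))
  have ha_succ (j : ℕ) : a j = 2 * a (j + 1) := by simp only [ha, pow_succ]; ring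
  have hζ_succ (j : ℕ) : ζ (j + 1) = ζ j + a (j + 1) • w := by
    simp only [hζ, ha_succ j]; module
  have hζ_x (j : ℕ) : ‖ζ j - x‖ = (t - a j) * ‖w‖ := by
    rw [hζ, add_sub_cancel_left, norm_smul, Real.norm_of_nonneg (by linarith [ha_le j])]
  have hζ_lim (j : ℕ) : ‖ζ j - (x + t • w)‖ = a j * ‖w‖ := by
    rw [show ζ j - (x + t • w) = -(a j • w) by simp only [hζ]; module, norm_neg, norm_smul,
      Real.norm_of_nonneg (ha_pos j).le]
  have hstep (j : ℕ) (y : E) (hy : y ∈ C ∧ ‖ζ j - y‖ ≤ δ * a j) :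
      ∃ z, z ∈ C ∧ ‖ζ (j + 1) - z‖ ≤ δ * a (j + 1) := by
    have hyx : ‖y - x‖ ≤ t * (‖w‖ + δ) := by
      have := norm_sub_le_norm_sub_add_norm_sub y (ζ j) x
      rw [norm_sub_rev y (ζ j), hζ_x] at this
      nlinarith [mul_nonneg hδ (sub_nonneg.2 (ha_le j)),
        mul_nonneg (ha_pos j).le (norm_nonneg w)]
    obtain ⟨z, hzC, hz⟩ := hC.exists_infDist_eq_dist ⟨x, hx⟩ (ζ (j + 1))
    refine ⟨z, hzC, ?_⟩
    rw [← dist_eq_norm, ← hz, hζ_succ]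
    exact infDist_add_smul_le_of_norm_sub_le (ha_pos _)
      (by linarith [hy.2, congrArg (δ * ·) (ha_succ j)]) (H y hy.1 hyx _ (ha_pos _) (ha_le _))
  choose! next hnext using hstep
  set y : ℕ → E := fun j => Nat.rec x next j
  have hy (j : ℕ) : y j ∈ C ∧ ‖ζ j - y j‖ ≤ δ * a j := by
    induction j with
    | zero => simpa [y, hζ, ha, hx] using mul_nonneg hδ ht.le
    | succ j ih => exact hnext j _ ih
  have hlim : Tendsto y atTop (𝓝 (x + t • w)) := by
    rw [tendsto_iff_norm_sub_tendsto_zero]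
    refine squeeze_zero (fun j => norm_nonneg _) (g := fun j => (δ + ‖w‖) * a j)
      (fun j => ?_) ?_
    · calc ‖y j - (x + t • w)‖ ≤ ‖ζ j - y j‖ + ‖ζ j - (x + t • w)‖ := by
            rw [norm_sub_rev (ζ j)]; exact norm_sub_le_norm_sub_add_norm_sub _ _ _
        _ ≤ (δ + ‖w‖) * a j := by rw [hζ_lim]; linarith [(hy j).2]
    · simpa [ha] using ((tendsto_pow_atTop_nhds_zero_of_lt_one (by norm_num : (0:ℝ) ≤ 1 / 2)
        (by norm_num)).const_mul t).const_mul (δ + ‖w‖)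
  exact hC.mem_of_tendsto hlim (Eventually.of_forall fun j => (hy j).1)

lemma exists_forall_add_smul_mem_of_mem_interior_tangentConeAtInfty
    (hp : ∀ a b, ‖p a‖ ≤ ‖p b‖ + ‖a - b‖) (hC : IsClosed C) {v : E}
    (hv : v ∈ interior (tangentConeAtInfty p C)) :
    ∃ ε : ℝ, 0 < ε ∧ ∃ R : ℝ, 0 < R ∧ ∃ lam : ℝ, 0 < lam ∧
      ∀ x ∈ C, R < ‖p x‖ → ∀ t ∈ Icc (0:ℝ) lam, ∀ v' ∈ closedBall v ε, x + t • v' ∈ C := by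
  obtain ⟨ε₀, hε₀, hball⟩ := Metric.isOpen_iff.mp isOpen_interior v hv
  set δ := ε₀ / 4 with hδ
  have hsub : closedBall v (3 * δ) ⊆ tangentConeAtInfty p C :=
    (closedBall_subset_ball (by rw [hδ]; linarith)).trans (hball.trans interior_subset)
  obtain ⟨R, hR, lam, hlam, happrox⟩ :=
    exists_forall_infDist_add_smul_le (δ := δ) (by positivity) hsub
  refine ⟨δ, by positivity, R + 1, by positivity, min lam (‖v‖ + 2 * δ)⁻¹, by positivity, ?_⟩
  rintro x hx hxR t ⟨ht0, ht⟩ v' hv'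
  rcases ht0.eq_or_lt with rfl | htpos
  · simpa using hx
  have hv'_norm : ‖v'‖ ≤ ‖v‖ + δ :=
    (norm_le_norm_add_norm_sub' v' v).trans (by gcongr; exact mem_closedBall_iff_norm.mp hv')
  have ht_reach : t * (‖v'‖ + δ) ≤ 1 := by
    have : t * (‖v‖ + 2 * δ) ≤ 1 := by
      rw [← le_div_iff₀ (by positivity), one_div]; exact ht.trans (min_le_right _ _)
    nlinarith
  refine add_smul_mem_of_forall_infDist_add_smul_le hC hx htpos (by positivity)
    fun y hy hyx s hs hst u hu =>
      happrox y hy ?_ s hs (hst.trans (ht.trans (min_le_left _ _))) u ?_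
  · linarith [hp x y, norm_sub_rev x y]
  · exact closedBall_subset_closedBall' (by linarith [mem_closedBall.mp hv']) hu

end TangentConeAtInfty

theorem stmt2_general (n : ℕ) (C : Set (En n)) (I : Finset (Fin n))
    (hC : IsClosed C) (v : En n) :
    v ∈ interior (tangentConeAtInfty (proj I) C) ↔
      ∃ ε : ℝ, 0 < ε ∧ ∃ R : ℝ, 0 < R ∧ ∃ lam : ℝ, 0 < lam ∧
        ∀ x ∈ C, R < ‖proj I x‖ → ∀ t ∈ Icc (0:ℝ) lam, ∀ v' ∈ closedBall v ε,
          x + t • v' ∈ C :=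
  ⟨exists_forall_add_smul_mem_of_mem_interior_tangentConeAtInfty
      (norm_proj_le_norm_proj_add_norm_sub I) hC,
    fun ⟨_, hε, _, _, _, hlam, h⟩ =>
      mem_interior_tangentConeAtInfty_of_forall_add_smul_mem hε hlam h⟩

/-- Theorem 3.6: characterization of the interior of the Clarke tangent cone at
infinity of a closed set. -/
theorem stmt2 (n : ℕ) (C : Set (En n)) (I : Finset (Fin n)) (hI : I.Nonempty)
    (hC : IsClosed C) (hunb : ¬ IsBounded (proj I '' C)) (v : En n) :
    v ∈ interior (tangentConeAtInfty (proj I) C) ↔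
      ∃ ε : ℝ, 0 < ε ∧ ∃ R : ℝ, 0 < R ∧ ∃ lam : ℝ, 0 < lam ∧
        ∀ x ∈ C, R < ‖proj I x‖ → ∀ t ∈ Icc (0:ℝ) lam, ∀ v' ∈ closedBall v ε,
          x + t • v' ∈ C :=
  stmt2_general n C I hC v
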